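/- Let M be a two-dimensional k-vector space with basis {m₁, m₂} and let a, b, c ∈ k. Let f, g : M → M be the k-linear maps whose matrices with respect to this basis are f = [[a, 1], [0, a]] and g = [[b, c], [0, b]]. Then R := f ⊗ g : M ⊗ M → M ⊗ M is a solution of the Long equation. -/

import Mathlib

open TensorProduct

noncomputable section

variable {k M : Type*} [Field k] [AddCommGroup M] [Module k M]

/-- The flip map τ : M ⊗ M → M ⊗ M, τ(m ⊗ n) = n ⊗ m. -/
def tau (k M : Type*) [Field k] [AddCommGroup M] [Module k M] :
    M ⊗[k] M →ₗ[k] M ⊗[k] M := (TensorProduct.comm k M M).toLinearMap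

/-- R¹² = R ⊗ id on M ⊗ (M ⊗ M) (transported along the associator). -/
def R12 (R : M ⊗[k] M →ₗ[k] M ⊗[k] M) :
    M ⊗[k] (M ⊗[k] M) →ₗ[k] M ⊗[k] (M ⊗[k] M) :=
  (TensorProduct.assoc k M M M).toLinearMap ∘ₗ
    TensorProduct.map R LinearMap.id ∘ₗ (TensorProduct.assoc k M M M).symm.toLinearMap

/-- R²³ = id ⊗ R on M ⊗ (M ⊗ M). -/
def R23 (R : M ⊗[k] M →ₗ[k] M ⊗[k] M) :
    M ⊗[k] (M ⊗[k] M) →ₗ[k] M ⊗[k] (M ⊗[k] M) :=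
  TensorProduct.map LinearMap.id R

/-- R¹³ = (id ⊗ τ)(R ⊗ id)(id ⊗ τ) on M ⊗ (M ⊗ M). -/
def R13 (R : M ⊗[k] M →ₗ[k] M ⊗[k] M) :
    M ⊗[k] (M ⊗[k] M) →ₗ[k] M ⊗[k] (M ⊗[k] M) :=
  TensorProduct.map LinearMap.id (tau k M) ∘ₗ R12 R ∘ₗ
    TensorProduct.map LinearMap.id (tau k M)

/-- R is a solution of the Long equation: R¹²R¹³ = R¹³R¹² and R¹²R²³ = R²³R¹². -/
def IsLongSolution (R : M ⊗[k] M →ₗ[k] M ⊗[k] M) : Prop :=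
  R12 R ∘ₗ R13 R = R13 R ∘ₗ R12 R ∧ R12 R ∘ₗ R23 R = R23 R ∘ₗ R12 R

end

/-! For `R = f ⊗ g`, both products `R¹²R¹³` and `R¹³R¹²` are `f² ⊗ g ⊗ g`, while `R¹²R²³ = f ⊗ gf ⊗ g`
and `R²³R¹² = f ⊗ fg ⊗ g`; so `f ⊗ g` solves the Long equation as soon as `f` and `g` commute. -/

section LongEquation

variable {k M : Type*} [Field k] [AddCommGroup M] [Module k M]

theorem R12_map_comp_R13_map_comm (f g : Module.End k M) :
    R12 (map f g) ∘ₗ R13 (map f g) = R13 (map f g) ∘ₗ R12 (map f g) := by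
  ext x y z
  simp [R12, R13, tau]

theorem R12_map_comp_R23_map_comm {f g : Module.End k M} (h : Commute f g) :
    R12 (map f g) ∘ₗ R23 (map f g) = R23 (map f g) ∘ₗ R12 (map f g) := by
  ext x y z
  have hy : f (g y) = g (f y) := LinearMap.congr_fun h.eq y
  simp [R12, R23, hy]

theorem isLongSolution_map_of_commute {f g : Module.End k M} (h : Commute f g) :
    IsLongSolution (map f g) :=
  ⟨R12_map_comp_R13_map_comm f g, R12_map_comp_R23_map_comm h⟩

end LongEquation

theorem long_equation_jordan_block_example
    {k M : Type*} [Field k] [AddCommGroup M] [Module k M]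
    (e : Module.Basis (Fin 2) k M) (a b c : k) (f g : M →ₗ[k] M)
    (hf0 : f (e 0) = a • e 0) (hf1 : f (e 1) = e 0 + a • e 1)
    (hg0 : g (e 0) = b • e 0) (hg1 : g (e 1) = c • e 0 + b • e 1) :
    IsLongSolution (TensorProduct.map f g) := by
  -- g = b + c N with N = f - a the nilpotent part of f, so g is a polynomial in f.
  have hg : g = b • 1 + c • (f - a • 1) := by
    refine e.ext fun i => ?_
    fin_cases i <;> simp [hf0, hf1, hg0, hg1, add_comm]
  have hfg : Commute f g := by
    rw [hg]
    exact ((Commute.one_right f).smul_right b).add_right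
      (((Commute.refl f).sub_right ((Commute.one_right f).smul_right a)).smul_right c)
  exact isLongSolution_map_of_commute hfg
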